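/- For all positive integers L and integers a, the identity ∑_{k≥0} C_{L,k}(q) · [k choose ⌊(k−a)/2⌋]_q = q^{T(a)} · [2L+1 choose L−a]_q holds, where T(j) = j(j+1)/2 and C_{L,k}(q) = ∑_{m=0}^{L} q^{T(m)+T(m+k)} [L choose m]_q [L−m choose k]_q. -/

import Mathlib

/-!
Both sides satisfy the same recurrence in `L`. Expanding `[L+1 choose m]_q` and
`[L+1-m choose k]_q` by the two `q`-Pascal rules and eliminating the two auxiliary sums that
appear gives
`C_{L+1,k} = (1 + q^{2L+2}) C_{L,k} + q^{L+1} C_{L,k-1} + q^{L+1} (1 - q^{k+1}) C_{L,k+1}`.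
Summing against `B_k(a) = [k choose ⌊(k-a)/2⌋]_q` and shifting `k`, the three-term identity
`B_{k+1}(a) + (1 - q^k) B_{k-1}(a) = B_k(a-1) + B_k(a+1)` (from `q`-Pascal and
`(1 - q^j) [m choose j]_q = (1 - q^m) [m-1 choose j-1]_q`) turns this into
`S_{L+1}(a) = (1 + q^{2L+2}) S_L(a) + q^{L+1} (S_L(a-1) + S_L(a+1))` for the left-hand side.
Applying `q`-Pascal twice to `[2L+3 choose L+1-a]_q` gives the same recurrence for the
right-hand side, and at `L = 0` both sides are `1` for `a ∈ {0, -1}` and `0` otherwise.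
-/

open LaurentPolynomial Finset

noncomputable section

/-- The Gaussian binomial coefficient `[m choose n]_q` as a polynomial in `q`,
defined via the `q`-Pascal recurrence; it equals `(q;q)_m/((q;q)_n (q;q)_{m-n})`
for `0 ≤ n ≤ m`. -/
def gb : ℕ → ℕ → Polynomial ℤ
  | _, 0 => 1
  | 0, _ + 1 => 0
  | m + 1, n + 1 => gb m n + Polynomial.X ^ (n + 1) * gb m (n + 1)

/-- `[m choose n]_q` with integer indices, zero unless `0 ≤ n ≤ m`,
viewed as a Laurent polynomial in `q`. -/
def qbin (m n : ℤ) : LaurentPolynomial ℤ :=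
  if 0 ≤ n ∧ n ≤ m then (gb m.toNat n.toNat).toLaurent else 0

/-- A Laurent polynomial is a polynomial in `q` with nonnegative coefficients. -/
def IsNonneg (x : LaurentPolynomial ℤ) : Prop :=
  ∃ P : Polynomial ℤ, (∀ n, 0 ≤ P.coeff n) ∧ P.toLaurent = x

/-- The triangular number `T(j) = j(j+1)/2`. -/
def tri (j : ℤ) : ℤ := j * (j + 1) / 2

/-- `C_{L,k}(q) = ∑_{m=0}^{L} q^{T(m)+T(m+k)} [L choose m]_q [L-m choose k]_q`. -/
def Cpoly (L k : ℕ) : LaurentPolynomial ℤ :=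
  ∑ m ∈ Finset.range (L + 1),
    T (tri m + tri (m + k)) * (gb L m).toLaurent * (gb (L - m) k).toLaurent

lemma gb_zero_right (m : ℕ) : gb m 0 = 1 := by cases m <;> rfl

lemma gb_eq_zero_of_lt : ∀ {m n : ℕ}, m < n → gb m n = 0
  | 0, _ + 1, _ => rfl
  | m + 1, n + 1, h => by
    rw [gb, gb_eq_zero_of_lt (by omega), gb_eq_zero_of_lt (by omega), mul_zero, add_zero]

lemma qbin_eq_zero {m n : ℤ} (h : ¬(0 ≤ n ∧ n ≤ m)) : qbin m n = 0 := if_neg h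

lemma qbin_natCast (m n : ℕ) : qbin m n = (gb m n).toLaurent := by
  by_cases h : n ≤ m
  · simp [qbin, h]
  · rw [qbin_eq_zero (by omega), gb_eq_zero_of_lt (by omega), map_zero]

lemma qbin_zero_right (m : ℕ) : qbin m 0 = 1 := by
  simpa [gb_zero_right] using qbin_natCast m 0

lemma qbin_zero_left (j : ℤ) : qbin 0 j = if j = 0 then 1 else 0 := by
  split_ifs with h
  · rw [h]; exact qbin_zero_right 0
  · exact qbin_eq_zero (by omega)

lemma qbin_succ {m : ℤ} (hm : 0 ≤ m) (j : ℤ) :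
    qbin (m + 1) j = qbin m (j - 1) + T j * qbin m j := by
  lift m to ℕ using hm
  rcases lt_or_ge j 0 with hj | hj
  · rw [qbin_eq_zero (by omega), qbin_eq_zero (by omega), qbin_eq_zero (by omega), mul_zero,
      add_zero]
  lift j to ℕ using hj
  cases j with
  | zero =>
    rw [Nat.cast_zero, zero_sub, qbin_eq_zero (n := -1) (by omega), T_zero, one_mul, zero_add,
      ← Nat.cast_succ, qbin_zero_right, qbin_zero_right]
  | succ n =>
    rw [Nat.cast_succ n, add_sub_cancel_right, ← Nat.cast_succ, ← Nat.cast_succ, qbin_natCast,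
      qbin_natCast, qbin_natCast, gb, map_add, map_mul, Polynomial.toLaurent_X_pow]

lemma qbin_succ' {m : ℤ} (hm : 0 ≤ m) (j : ℤ) :
    qbin (m + 1) j = T (m + 1 - j) * qbin m (j - 1) + qbin m j := by
  lift m to ℕ using hm
  induction m generalizing j with
  | zero =>
    rw [Nat.cast_zero, qbin_succ le_rfl, qbin_zero_left, qbin_zero_left]
    split_ifs <;> simp_all [sub_eq_zero]
  | succ m ih =>
    push_cast
    have hm : (0 : ℤ) ≤ m := m.cast_nonneg
    have hw : (T j * T (m + 1 - j) : ℤ[T;T⁻¹]) = T (m + 1 + 1 - j) * T (j - 1) := by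
      rw [← T_add, ← T_add]; ring_nf
    linear_combination (norm := ring_nf) qbin_succ (m := m + 1) (by positivity) j + ih (j - 1)
      - T (m + 1 + 1 - j) * qbin_succ hm (j - 1) + T j * ih j - qbin_succ hm j
      + qbin m (j - 1) * hw

lemma one_sub_T_mul_qbin {m : ℤ} (hm : 0 ≤ m) (j : ℤ) :
    (1 - T j) * qbin m j = (1 - T m) * qbin (m - 1) (j - 1) := by
  obtain rfl | hm := hm.eq_or_lt
  · rw [qbin_zero_left]
    split_ifs with h <;> simp [h]
  obtain ⟨n, hn, rfl⟩ : ∃ n, 0 ≤ n ∧ m = n + 1 := ⟨m - 1, by omega, by ring⟩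
  have hw : (T j * T (n + 1 - j) : ℤ[T;T⁻¹]) = T (n + 1) := by rw [← T_add]; ring_nf
  linear_combination (norm := ring_nf) qbin_succ hn j - T j * qbin_succ' hn j
    - qbin n (j - 1) * hw

lemma qbin_succ_add_qbin_pred {k : ℤ} (hk : 0 ≤ k) (j : ℤ) :
    qbin (k + 1) j + (1 - T k) * qbin (k - 1) (j - 1) = qbin k j + qbin k (j - 1) := by
  linear_combination qbin_succ hk j - one_sub_T_mul_qbin hk j

lemma qbin_add_two {n : ℤ} (hn : 0 ≤ n) (j : ℤ) :
    qbin (n + 2) j =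
      T (n + 2 - j) * qbin n (j - 2) + (1 + T (n + 1)) * qbin n (j - 1) + T j * qbin n j := by
  have hw : (T j * T (n + 1 - j) : ℤ[T;T⁻¹]) = T (n + 1) := by rw [← T_add]; ring_nf
  linear_combination (norm := ring_nf) qbin_succ (m := n + 1) (by omega) j
    + qbin_succ' hn (j - 1) + T j * qbin_succ' hn j + qbin n (j - 1) * hw

lemma tri_add_one (x : ℤ) : tri (x + 1) = tri x + x + 1 := by
  rw [tri, tri, show (x + 1) * (x + 1 + 1) = x * (x + 1) + (x + 1) * 2 by ring,
    Int.add_mul_ediv_right _ _ two_ne_zero]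
  ring

lemma tri_sub_one (x : ℤ) : tri (x - 1) = tri x - x := by
  have := tri_add_one (x - 1)
  rw [sub_add_cancel] at this
  linarith

/-- `Cpoly` with an integer `k`; it vanishes for `k < 0`, so its recurrence in `L` needs no
boundary case. -/
def Cz (L : ℕ) (k : ℤ) : ℤ[T;T⁻¹] :=
  ∑ m ∈ range (L + 1), T (tri m + tri (m + k)) * qbin L m * qbin (L - m) k

def CzTwisted (L : ℕ) (k : ℤ) : ℤ[T;T⁻¹] :=
  ∑ m ∈ range (L + 1), T (tri m + tri (m + k) + m) * qbin L m * qbin (L - m) k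

def CzWidened (L : ℕ) (k : ℤ) : ℤ[T;T⁻¹] :=
  ∑ m ∈ range (L + 1), T (tri m + tri (m + k)) * qbin L m * qbin (L + 1 - m) k

lemma Cz_eq_zero {L : ℕ} {k : ℤ} (hk : k < 0 ∨ L < k) : Cz L k = 0 :=
  sum_eq_zero fun m _ => by rw [qbin_eq_zero (m := L - m) (by omega), mul_zero]

lemma Cpoly_eq_Cz (L k : ℕ) : Cpoly L k = Cz L k := by
  refine sum_congr rfl fun m hm => ?_
  rw [qbin_natCast, ← Nat.cast_sub (mem_range_succ_iff.mp hm), qbin_natCast]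

lemma CzWidened_eq_T_mul (L : ℕ) (k : ℤ) :
    CzWidened L k = T k * (Cz L k + CzTwisted L (k - 1)) := by
  rw [CzWidened, Cz, CzTwisted, ← sum_add_distrib, mul_sum]
  refine sum_congr rfl fun m hm => ?_
  have hmL := mem_range_succ_iff.mp hm
  have hw : (T (tri m + tri (m + k)) : ℤ[T;T⁻¹]) =
      T k * T (tri m + tri (m + (k - 1)) + m) := by
    rw [← T_add, ← add_sub_assoc (m : ℤ) k 1, tri_sub_one]
    ring_nf
  rw [show (L : ℤ) + 1 - m = L - m + 1 by ring, qbin_succ (by omega), hw]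
  ring

lemma CzWidened_eq_Cz_add (L : ℕ) (k : ℤ) :
    CzWidened L k = Cz L k + T (L + 1) * Cz L (k - 1) := by
  rw [CzWidened, Cz, Cz, mul_sum, ← sum_add_distrib]
  refine sum_congr rfl fun m hm => ?_
  have hmL := mem_range_succ_iff.mp hm
  have hw : (T (tri m + tri (m + k)) * T (L - m + 1 - k) : ℤ[T;T⁻¹]) =
      T (L + 1) * T (tri m + tri (m + (k - 1))) := by
    rw [← T_add, ← T_add, ← add_sub_assoc (m : ℤ) k 1, tri_sub_one]
    ring_nf
  rw [show (L : ℤ) + 1 - m = L - m + 1 by ring, qbin_succ' (by omega)]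
  linear_combination qbin L m * qbin (L - m) (k - 1) * hw

lemma Cz_succ_eq_CzWidened_add (L : ℕ) (k : ℤ) :
    Cz (L + 1) k = CzWidened L k + T (L + k + 2) * CzTwisted L k := by
  have hwide : CzWidened L k = ∑ m ∈ range (L + 1 + 1),
      T (tri m + tri (m + k)) * qbin L m * qbin (L + 1 - m) k := by
    rw [sum_range_succ, qbin_eq_zero (n := (L + 1 : ℕ)) (by omega), mul_zero, zero_mul, add_zero,
      CzWidened]
  have hsplit : Cz (L + 1) k = CzWidened L k + ∑ m ∈ range (L + 1 + 1),
      T (tri m + tri (m + k)) * T (L + 1 - m) * qbin L (m - 1) * qbin (L + 1 - m) k := by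
    rw [hwide, Cz, ← sum_add_distrib]
    refine sum_congr rfl fun m hm => ?_
    push_cast
    rw [qbin_succ' (by omega)]
    ring
  rw [hsplit, sum_range_succ', CzTwisted, mul_sum]
  simp only [Nat.cast_zero, zero_sub, qbin_eq_zero (m := L) (n := -1) (by omega), mul_zero,
    zero_mul, add_zero]
  congr 1
  refine sum_congr rfl fun m _ => ?_
  have hw : (T (tri (m + 1) + tri (m + 1 + k)) * T (L - m) : ℤ[T;T⁻¹]) =
      T (L + k + 2) * T (tri m + tri (m + k) + m) := by
    rw [← T_add, ← T_add, tri_add_one, add_right_comm (m : ℤ) 1 k, tri_add_one]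
    ring_nf
  push_cast
  linear_combination (norm := ring_nf) qbin L m * qbin (L - m) k * hw

lemma Cz_succ (L : ℕ) (k : ℤ) :
    Cz (L + 1) k = (1 + T (2 * L + 2)) * Cz L k + T (L + 1) * Cz L (k - 1)
      + T (L + 1) * (1 - T (k + 1)) * Cz L (k + 1) := by
  have h1 := CzWidened_eq_T_mul L (k + 1)
  have h2 := CzWidened_eq_Cz_add L (k + 1)
  rw [add_sub_cancel_right] at h1 h2
  have ha : (T (L + k + 2) : ℤ[T;T⁻¹]) = T (L + 1) * T (k + 1) := by rw [← T_add]; ring_nf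
  have hb : (T (L + 1) * T (L + 1) : ℤ[T;T⁻¹]) = T (2 * L + 2) := by rw [← T_add]; ring_nf
  linear_combination Cz_succ_eq_CzWidened_add L k + CzWidened_eq_Cz_add L k
    + T (L + 1) * (h2 - h1) + CzTwisted L k * ha + Cz L k * hb

lemma sum_Cz_succ_mul (L : ℕ) (f : ℤ → ℤ[T;T⁻¹]) :
    ∑ k ∈ range (L + 1 + 1), Cz (L + 1) k * f k =
      (1 + T (2 * L + 2)) * ∑ k ∈ range (L + 1), Cz L k * f k
        + T (L + 1) * ∑ k ∈ range (L + 1), Cz L k * (f (k + 1) + (1 - T k) * f (k - 1)) := by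
  have drop_last : ∀ g : ℤ → ℤ[T;T⁻¹],
      ∑ k ∈ range (L + 1 + 1), Cz L k * g k = ∑ k ∈ range (L + 1), Cz L k * g k := by
    intro g
    rw [sum_range_succ, Cz_eq_zero (by right; push_cast; omega), zero_mul, add_zero]
  have shift_up : ∑ k ∈ range (L + 1 + 1), Cz L (k - 1) * f k =
      ∑ k ∈ range (L + 1), Cz L k * f (k + 1) := by
    rw [sum_range_succ', Nat.cast_zero, zero_sub, Cz_eq_zero (by left; norm_num), zero_mul,
      add_zero]
    push_cast
    simp only [add_sub_cancel_right]
  have shift_down : ∑ k ∈ range (L + 1 + 1), (1 - T (k + 1)) * Cz L (k + 1) * f k =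
      ∑ k ∈ range (L + 1), Cz L k * ((1 - T k) * f (k - 1)) := by
    rw [← drop_last fun k => (1 - T k) * f (k - 1),
      sum_range_succ' (fun k : ℕ => Cz L k * ((1 - T (k : ℤ)) * f (k - 1))),
      sum_range_succ (fun k : ℕ => (1 - T ((k : ℤ) + 1)) * Cz L (k + 1) * f k),
      Nat.cast_zero, T_zero, sub_self, Cz_eq_zero (L := L) (k := (L + 1 : ℕ) + 1) (by omega)]
    push_cast
    simp only [add_sub_cancel_right, zero_mul, mul_zero, add_zero]
    exact sum_congr rfl fun k _ => by ring
  have expand : ∑ k ∈ range (L + 1 + 1), Cz (L + 1) k * f k =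
      (1 + T (2 * L + 2)) * ∑ k ∈ range (L + 1 + 1), Cz L k * f k
        + T (L + 1) * ∑ k ∈ range (L + 1 + 1), Cz L (k - 1) * f k
        + T (L + 1) * ∑ k ∈ range (L + 1 + 1), (1 - T (k + 1)) * Cz L (k + 1) * f k := by
    simp only [mul_sum, ← sum_add_distrib, Cz_succ]
    exact sum_congr rfl fun k _ => by ring
  rw [expand, drop_last, shift_up, shift_down, add_assoc, ← mul_add, ← sum_add_distrib]
  simp only [mul_add]

def qbinHalf (k a : ℤ) : ℤ[T;T⁻¹] := qbin k ((k - a).fdiv 2)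

lemma qbinHalf_succ_add_pred {k : ℤ} (hk : 0 ≤ k) (a : ℤ) :
    qbinHalf (k + 1) a + (1 - T k) * qbinHalf (k - 1) a =
      qbinHalf k (a - 1) + qbinHalf k (a + 1) := by
  have fdiv_sub_two : ∀ x : ℤ, (x - 2).fdiv 2 = x.fdiv 2 - 1 := fun x => by
    rw [Int.fdiv_eq_ediv_of_nonneg _ zero_le_two, Int.fdiv_eq_ediv_of_nonneg _ zero_le_two]
    omega
  have h1 : k - 1 - a = k + 1 - a - 2 := by ring
  have h2 : k - (a + 1) = k + 1 - a - 2 := by ring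
  have h3 : k - (a - 1) = k + 1 - a := by ring
  simp only [qbinHalf, h1, h2, h3, fdiv_sub_two]
  exact qbin_succ_add_qbin_pred hk _

lemma T_tri_mul_qbin_succ (L : ℕ) (a : ℤ) :
    T (tri a) * qbin (2 * (L + 1 : ℕ) + 1) ((L + 1 : ℕ) - a) =
      (1 + T (2 * L + 2)) * (T (tri a) * qbin (2 * L + 1) (L - a))
        + T (L + 1) * (T (tri (a - 1)) * qbin (2 * L + 1) (L - (a - 1))
          + T (tri (a + 1)) * qbin (2 * L + 1) (L - (a + 1))) := by
  have hA : (T (tri a) * T (2 * L + 1 + 2 - (L + 1 - a)) : ℤ[T;T⁻¹]) =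
      T (L + 1) * T (tri (a + 1)) := by
    rw [← T_add, ← T_add, tri_add_one]; ring_nf
  have hC : (T (tri a) * T (L + 1 - a) : ℤ[T;T⁻¹]) = T (L + 1) * T (tri (a - 1)) := by
    rw [← T_add, ← T_add, tri_sub_one]; ring_nf
  push_cast
  linear_combination (norm := ring_nf)
    T (tri a) * qbin_add_two (n := 2 * L + 1) (by positivity) (L + 1 - a)
      + qbin (2 * L + 1) (L + 1 - a - 2) * hA + qbin (2 * L + 1) (L + 1 - a) * hC

lemma qbinHalf_zero (a : ℤ) : qbinHalf 0 a = T (tri a) * qbin 1 (-a) := by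
  rw [qbinHalf, Int.fdiv_eq_ediv_of_nonneg _ zero_le_two, ← zero_add (1 : ℤ), qbin_succ le_rfl,
    qbin_zero_left, qbin_zero_left, qbin_zero_left]
  rcases (show a = 0 ∨ a = -1 ∨ (a ≠ 0 ∧ a ≠ -1) by omega) with rfl | rfl | ⟨h0, h1⟩
  · simp [tri]
  · simp [tri]
  · rw [if_neg (by omega), if_neg (by omega), if_neg (by omega)]
    ring

lemma sum_Cz_mul_qbinHalf (L : ℕ) (a : ℤ) :
    ∑ k ∈ range (L + 1), Cz L k * qbinHalf k a = T (tri a) * qbin (2 * L + 1) (L - a) := by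
  induction L generalizing a with
  | zero => simp [Cz, tri, qbin_zero_left, qbinHalf_zero]
  | succ L ih =>
    have kernel : ∀ k ∈ range (L + 1),
        Cz L k * (qbinHalf (k + 1) a + (1 - T k) * qbinHalf (k - 1) a) =
          Cz L k * qbinHalf k (a - 1) + Cz L k * qbinHalf k (a + 1) := fun k _ => by
      rw [qbinHalf_succ_add_pred k.cast_nonneg, mul_add]
    rw [sum_Cz_succ_mul L (qbinHalf · a), sum_congr rfl kernel, sum_add_distrib, ih, ih, ih,
      T_tri_mul_qbin_succ]

theorem berkovich_transformation_general (L : ℕ) (a : ℤ) :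
    ∑ᶠ k : ℕ, Cpoly L k * qbin k (Int.fdiv ((k : ℤ) - a) 2) =
      T (tri a) * qbin (2 * L + 1) ((L : ℤ) - a) := by
  have hsupp : (Function.support fun k : ℕ => Cpoly L k * qbin k (Int.fdiv ((k : ℤ) - a) 2)) ⊆
      range (L + 1) := fun k hk => by
    by_contra h
    rw [coe_range, Set.mem_Iio, not_lt] at h
    exact hk (by dsimp only; rw [Cpoly_eq_Cz, Cz_eq_zero (by omega), zero_mul])
  rw [finsum_eq_sum_of_support_subset _ hsupp, ← sum_Cz_mul_qbinHalf]
  exact sum_congr rfl fun k _ => by rw [Cpoly_eq_Cz]; rfl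

/-- Berkovich's transformation:
`∑_{k ≥ 0} C_{L,k}(q) [k choose ⌊(k-a)/2⌋]_q = q^{T(a)} [2L+1 choose L-a]_q`. -/
theorem berkovich_transformation (L : ℕ) (hL : 0 < L) (a : ℤ) :
    ∑ᶠ k : ℕ, Cpoly L k * qbin k (Int.fdiv ((k : ℤ) - a) 2) =
      T (tri a) * qbin (2 * L + 1) ((L : ℤ) - a) :=
  berkovich_transformation_general L a
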